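/- Entrywise comparison of the exactly scaled and approximately scaled matrices: for all i ≠ j, ((1 − δ)/(1 + ε)) · v̂_i A_{i,j} v̂_j ≤ v_i A_{i,j} v_j and (1 − δ)(1 − ε) · v_i A_{i,j} v_j ≤ v̂_i A_{i,j} v̂_j, where δ = min{ 1 , 4ε / ((n − 2) · min_{i ≠ j} v̂_i A_{i,j} v̂_j) }. -/

import Mathlib

open Finset

/-!
Put `B = v̂ A v̂` and `u = v / v̂`: the exact scaling reads `u_i ∑_j B_ij u_j = 1`, while the row
sums of `B` lie in `[1 - ε, 1 + ε]`. At the indices of the largest value `M` and the smallest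
value `μ` of `u` this gives `1 ≤ μ M (1 + ε)` and `μ M (1 - ε) ≤ 1`. Writing `B u` in those two
rows as a multiple of the row sum plus the deviations `u_j - μ`, resp. `M - u_j`, each weighted
by an off-diagonal entry `≥ m`, yields `(n - 2) m (M - μ) ≤ 2 ε M`, that is `(1 - δ) M ≤ μ`.
As `v_i A_ij v_j = u_i u_j B_ij` with `μ² ≤ u_i u_j ≤ M²`, both inequalities follow.
-/

section
variable {ι : Type*} [Fintype ι] {B : ι → ι → ℝ} {u : ι → ℝ}

lemma one_le_mul_mul_sum_of_forall_le {i : ι} {M : ℝ} (hB : ∀ j, 0 ≤ B i j) (hui : 0 ≤ u i)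
    (hM : ∀ j, u j ≤ M) (hscale : u i * ∑ j, B i j * u j = 1) :
    1 ≤ u i * M * ∑ j, B i j := by
  calc 1 = u i * ∑ j, B i j * u j := hscale.symm
    _ ≤ u i * ∑ j, B i j * M := by gcongr with j; exacts [hB j, hM j]
    _ = u i * M * ∑ j, B i j := by rw [← sum_mul]; ring

lemma mul_mul_sum_le_one_of_forall_ge {i : ι} {μ : ℝ} (hB : ∀ j, 0 ≤ B i j) (hui : 0 ≤ u i)
    (hμ : ∀ j, μ ≤ u j) (hscale : u i * ∑ j, B i j * u j = 1) :
    u i * μ * ∑ j, B i j ≤ 1 := by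
  calc u i * μ * ∑ j, B i j = u i * ∑ j, B i j * μ := by rw [← sum_mul]; ring
    _ ≤ u i * ∑ j, B i j * u j := by gcongr with j; exacts [hB j, hμ j]
    _ = 1 := hscale

lemma mul_sum_sub_le_sum_mul [DecidableEq ι] {i : ι} {m : ℝ} {f : ι → ℝ} (hdiag : B i i = 0)
    (hm : ∀ j, j ≠ i → m ≤ B i j) (hf : ∀ j, 0 ≤ f j) :
    m * (∑ j, f j - f i) ≤ ∑ j, B i j * f j := by
  rw [← sum_erase_eq_sub (mem_univ i), mul_sum,
    ← sum_erase univ (f := fun j => B i j * f j) (a := i) (by simp [hdiag])]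
  exact sum_le_sum fun j hj =>
    mul_le_mul_of_nonneg_right (hm j (ne_of_mem_erase hj)) (hf j)

lemma one_sub_min_mul_le {ε c M μ : ℝ} (hε : 0 ≤ ε) (hc : 0 < c) (hμ : 0 ≤ μ) (hM : 0 ≤ M)
    (h : c * (M - μ) ≤ 2 * ε * M) : (1 - min 1 (4 * ε / c)) * M ≤ μ := by
  rcases min_cases 1 (4 * ε / c) with ⟨h1, -⟩ | ⟨h1, -⟩
  · rw [h1]; linarith
  · have : M - μ ≤ 4 * ε / c * M := by
      rw [div_mul_eq_mul_div, le_div_iff₀ hc]; nlinarith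
    rw [h1]; linarith

lemma card_sub_two_mul_mul_sub_le [DecidableEq ι] {ε m : ℝ} {iM im : ι}
    (hB : ∀ i j, 0 ≤ B i j) (hdiag : ∀ i, B i i = 0) (hm : ∀ i j, i ≠ j → m ≤ B i j)
    (hu : ∀ i, 0 < u i) (hscale : ∀ i, u i * ∑ j, B i j * u j = 1)
    (hrow : ∀ i, |∑ j, B i j - 1| ≤ ε) (hmax : ∀ j, u j ≤ u iM) (hmin : ∀ j, u im ≤ u j) :
    ((Fintype.card ι : ℝ) - 2) * m * (u iM - u im) ≤ 2 * ε * u iM := by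
  set M := u iM
  set μ := u im
  have hM := hu iM
  have hμ := hu im
  have hT1 : m * (∑ j, (u j - μ) - (M - μ)) ≤ ∑ j, B iM j * u j - μ * ∑ j, B iM j := by
    calc _ ≤ ∑ j, B iM j * (u j - μ) := mul_sum_sub_le_sum_mul (hdiag iM)
          (fun j hj => hm iM j hj.symm) (fun j => sub_nonneg.2 (hmin j))
      _ = _ := by simp only [mul_sub, sum_sub_distrib, ← sum_mul]; ring
  have hT2 : m * (∑ j, (M - u j) - (M - μ)) ≤ M * ∑ j, B im j - ∑ j, B im j * u j := by
    calc _ ≤ ∑ j, B im j * (M - u j) := mul_sum_sub_le_sum_mul (hdiag im)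
          (fun j hj => hm im j hj.symm) (fun j => sub_nonneg.2 (hmax j))
      _ = _ := by simp only [mul_sub, sum_sub_distrib, ← sum_mul]; ring
  have hcard : ∑ j, (u j - μ) + ∑ j, (M - u j) = Fintype.card ι * (M - μ) := by
    rw [← sum_add_distrib]; simp [mul_sub]
  have hF2 := mul_mul_sum_le_one_of_forall_ge (hB iM) hM.le hmin (hscale iM)
  have hr1 : μ * (1 - ε) ≤ μ * ∑ j, B iM j := by
    gcongr; linarith [(abs_le.1 (hrow iM)).1]
  have hr2 : M * ∑ j, B im j ≤ M * (1 + ε) := by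
    gcongr; linarith [(abs_le.1 (hrow im)).2]
  set a := ∑ j, B iM j * u j
  set b := ∑ j, B im j * u j
  have ha : M * a = 1 := hscale iM
  have hb : μ * b = 1 := hscale im
  -- `b - a = 1/μ - 1/M = (M - μ) / (M μ)`
  have hgap : (M - μ) * (1 - ε) ≤ b - a := by
    have hab : 1 - ε ≤ a * b := by
      refine le_of_mul_le_mul_left ?_ (mul_pos hM hμ)
      calc M * μ * (1 - ε) ≤ M * μ * ∑ j, B iM j := by
            gcongr; linarith [(abs_le.1 (hrow iM)).1]
        _ ≤ 1 := hF2
        _ = M * μ * (a * b) := by linear_combination (-(μ * b)) * ha - hb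
    calc (M - μ) * (1 - ε) ≤ (M - μ) * (a * b) := by gcongr; linarith [hmin iM]
      _ = b - a := by linear_combination b * ha - a * hb
  linear_combination hT1 + hT2 - m * hcard + hr1 + hr2 + hgap

theorem one_sub_div_le_mul_and_mul_le_one [DecidableEq ι] {ε m δ : ℝ}
    (hcard : 3 ≤ Fintype.card ι) (hε0 : 0 < ε) (hε1 : ε < 1)
    (hB : ∀ i j, 0 ≤ B i j) (hdiag : ∀ i, B i i = 0) (hm : ∀ i j, i ≠ j → m ≤ B i j)
    (hm_pos : 0 < m) (hu : ∀ i, 0 < u i) (hscale : ∀ i, u i * ∑ j, B i j * u j = 1)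
    (hrow : ∀ i, |∑ j, B i j - 1| ≤ ε)
    (hδ : δ = min 1 (4 * ε / (((Fintype.card ι : ℝ) - 2) * m))) (i j : ι) :
    (1 - δ) / (1 + ε) ≤ u i * u j ∧ (1 - δ) * (1 - ε) * (u i * u j) ≤ 1 := by
  have : Nonempty ι := ⟨i⟩
  obtain ⟨iM, hmax⟩ := Finite.exists_max u
  obtain ⟨im, hmin⟩ := Finite.exists_min u
  set M := u iM
  set μ := u im
  have hM := hu iM
  have hμ := hu im
  have hc : 0 < ((Fintype.card ι : ℝ) - 2) * m := by
    have : (3 : ℝ) ≤ Fintype.card ι := by exact_mod_cast hcard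
    nlinarith
  have hspread : (1 - δ) * M ≤ μ := hδ ▸ one_sub_min_mul_le hε0.le hc hμ.le hM.le
    (card_sub_two_mul_mul_sub_le hB hdiag hm hu hscale hrow hmax hmin)
  have hF1 : 1 ≤ μ * M * (1 + ε) :=
    calc 1 ≤ μ * M * ∑ j, B im j := one_le_mul_mul_sum_of_forall_le (hB im) hμ.le hmax (hscale im)
      _ ≤ μ * M * (1 + ε) := by gcongr; linarith [(abs_le.1 (hrow im)).2]
  have hF2 : μ * M * (1 - ε) ≤ 1 :=
    calc μ * M * (1 - ε) ≤ M * μ * ∑ j, B iM j := by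
          rw [mul_comm μ]; gcongr; linarith [(abs_le.1 (hrow iM)).1]
      _ ≤ 1 := mul_mul_sum_le_one_of_forall_ge (hB iM) hM.le hmin (hscale iM)
  have hδ1 : 0 ≤ 1 - δ := sub_nonneg.2 (hδ ▸ min_le_left _ _)
  constructor
  · calc (1 - δ) / (1 + ε) ≤ (1 - δ) * M * μ := by
          rw [div_le_iff₀ (by linarith)]; nlinarith
      _ ≤ μ * μ := by gcongr
      _ ≤ u i * u j := mul_le_mul (hmin i) (hmin j) hμ.le (hu i).le
  · calc (1 - δ) * (1 - ε) * (u i * u j) ≤ (1 - δ) * (1 - ε) * (M * M) :=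
          mul_le_mul_of_nonneg_left (mul_le_mul (hmax i) (hmax j) (hu j).le hM.le)
            (mul_nonneg hδ1 (by linarith))
      _ = (1 - δ) * M * M * (1 - ε) := by ring
      _ ≤ μ * M * (1 - ε) := by gcongr
      _ ≤ 1 := hF2

end

/-- Entrywise comparison of the exactly scaled and approximately scaled
matrices: for all `i ≠ j`,
`((1 − δ)/(1 + ε)) · v̂_i A_{i,j} v̂_j ≤ v_i A_{i,j} v_j` and
`(1 − δ)(1 − ε) · v_i A_{i,j} v_j ≤ v̂_i A_{i,j} v̂_j`, where
`δ = min { 1 , 4ε / ((n − 2) · min_{i ≠ j} v̂_i A_{i,j} v̂_j) }`. -/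
theorem entrywise_scaled_matrix_comparison
    {n : ℕ} (hn : 3 ≤ n)
    (A : Fin n → Fin n → ℝ)
    (hA_nonneg : ∀ i j, 0 ≤ A i j)
    (hA_diag : ∀ i, A i i = 0)
    (hA_offdiag : ∀ i j, i ≠ j → 0 < A i j)
    (v : Fin n → ℝ) (hv : ∀ i, 0 < v i)
    (hds : ∀ i, ∑ j, v i * A i j * v j = 1)
    (ε : ℝ) (hε0 : 0 < ε) (hε1 : ε < 1)
    (vh : Fin n → ℝ) (hvh : ∀ i, 0 < vh i)
    (happrox : ∀ i, |∑ j, vh i * A i j * vh j - 1| ≤ ε)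
    (δ : ℝ)
    (hδ : δ = min 1 (4 * ε / (((n : ℝ) - 2) *
      Finset.inf' (Finset.univ.filter (fun p : Fin n × Fin n => p.1 ≠ p.2))
        ⟨(⟨0, by omega⟩, ⟨1, by omega⟩), by
          simp only [Finset.mem_filter, Finset.mem_univ, true_and]
          exact Fin.ne_of_val_ne (by simp)⟩
        (fun p => vh p.1 * A p.1 p.2 * vh p.2)))) :
    ∀ i j, i ≠ j →
      ((1 - δ) / (1 + ε)) * (vh i * A i j * vh j) ≤ v i * A i j * v j ∧
      (1 - δ) * (1 - ε) * (v i * A i j * v j) ≤ vh i * A i j * vh j := by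
  intro i j hij
  obtain ⟨m, hm_le, hm_pos, hδ⟩ : ∃ m : ℝ, (∀ i j, i ≠ j → m ≤ vh i * A i j * vh j) ∧ 0 < m ∧
      δ = min 1 (4 * ε / (((n : ℝ) - 2) * m)) :=
    ⟨_, fun i j hij => inf'_le _ (b := (i, j)) (by simpa using hij),
      (lt_inf'_iff _).2 fun p hp =>
        mul_pos (mul_pos (hvh _) (hA_offdiag _ _ (mem_filter.1 hp).2)) (hvh _),
      hδ⟩
  have hB : ∀ i j, 0 ≤ vh i * A i j * vh j := fun i j =>
    mul_nonneg (mul_nonneg (hvh i).le (hA_nonneg i j)) (hvh j).le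
  have hentry : ∀ i j, v i * A i j * v j = v i / vh i * (v j / vh j) * (vh i * A i j * vh j) := by
    intro i j; field_simp [(hvh i).ne', (hvh j).ne']
  obtain ⟨hlo, hhi⟩ := one_sub_div_le_mul_and_mul_le_one (u := fun i => v i / vh i)
    (by simpa using hn) hε0 hε1 hB (fun i => by simp [hA_diag]) hm_le hm_pos
    (fun i => div_pos (hv i) (hvh i))
    (fun i => by rw [← hds i, mul_sum]; exact sum_congr rfl fun j _ => by rw [hentry]; ring)
    happrox (by simpa using hδ) i j
  rw [hentry]
  constructor
  · exact mul_le_mul_of_nonneg_right hlo (hB i j)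
  · linarith [mul_le_mul_of_nonneg_right hhi (hB i j)]
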